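/- For every natural number n ≥ 0, Σ_{k=0}^{n} S(n,k) · (−1)^k · k!/(k+1) = B_n, the n-th Bernoulli number. -/

import Mathlib

open Finset

/-- Stirling numbers of the second kind. -/
def S2 : ℕ → ℕ → ℕ
  | 0, 0 => 1
  | 0, _ + 1 => 0
  | _ + 1, 0 => 0
  | n + 1, k + 1 => S2 n k + (k + 1) * S2 n (k + 1)

lemma S2_eq_zero : ∀ {n k : ℕ}, n < k → S2 n k = 0
  | 0, 0, h => absurd h (by omega)
  | 0, _ + 1, _ => rfl
  | n + 1, k + 1, h => by
    have h1 : n < k := by omega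
    have h2 : n < k + 1 := by omega
    simp [S2, S2_eq_zero h1, S2_eq_zero h2]

lemma S2_zero : ∀ n, S2 (n + 1) 0 = 0 := fun _ => rfl

/-- `∑_{k=0}^n C(n,k) S(k,j) = S(n+1,j+1)`. -/
lemma choose_mul_S2 : ∀ n j, (∑ k ∈ range (n + 1), n.choose k * S2 k j) = S2 (n + 1) (j + 1)
  | 0, j => by cases j <;> simp [S2]
  | n + 1, 0 => by
    have hS : ∀ m, S2 (m + 1) 1 = 1 := by
      intro m
      induction m with
      | zero => rfl
      | succ m ih =>
        show S2 (m + 1) 0 + 1 * S2 (m + 1) 1 = 1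
        rw [ih, S2_zero]
    rw [hS]
    have : ∀ k ∈ range (n + 2), (n + 1).choose k * S2 k 0 = if k = 0 then 1 else 0 := by
      intro k hk
      cases k with
      | zero => simp [S2]
      | succ k => simp [S2]
    rw [Finset.sum_congr rfl this, Finset.sum_ite_eq' (range (n + 2)) 0 (fun _ => 1)]
    simp
  | n + 1, j + 1 => by
    rw [Finset.sum_range_succ']
    have hterm : ∀ k, (n + 1).choose (k + 1) * S2 (k + 1) (j + 1)
        = n.choose k * S2 k j + (j + 1) * (n.choose k * S2 k (j + 1))
          + n.choose (k + 1) * S2 (k + 1) (j + 1) := by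
      intro k
      rw [Nat.choose_succ_succ,
        show S2 (k + 1) (j + 1) = S2 k j + (j + 1) * S2 k (j + 1) from rfl]
      ring
    simp only [hterm]
    rw [Finset.sum_add_distrib, Finset.sum_add_distrib, ← Finset.mul_sum]
    have h1 := choose_mul_S2 n j
    have h2 := choose_mul_S2 n (j + 1)
    have h3 : (∑ k ∈ range (n + 1), n.choose (k + 1) * S2 (k + 1) (j + 1))
        = S2 (n + 1) (j + 2) := by
      have := choose_mul_S2 n (j + 1)
      rw [Finset.sum_range_succ'] at this
      have hlast : n.choose n * S2 n (j + 1) = n.choose n * S2 n (j + 1) := rfl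
      -- this : ∑ k ∈ range n, n.choose (k+1) * S2 (k+1) (j+1) + n.choose 0 * S2 0 (j+1) = S2 (n+1) (j+2)
      rw [Finset.sum_range_succ]
      have : (∑ k ∈ range n, n.choose (k + 1) * S2 (k + 1) (j + 1)) = S2 (n + 1) (j + 2) := by
        simpa [S2] using this
      rw [this]
      have : n.choose (n + 1) = 0 := Nat.choose_eq_zero_of_lt (by omega)
      simp [this]
    rw [h1, h2, h3,
      show S2 (n + 1 + 1) (j + 1 + 1)
          = S2 (n + 1) (j + 1) + (j + 1 + 1) * S2 (n + 1) (j + 1 + 1) from rfl,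
      show S2 0 (j + 1) = 0 from rfl]
    ring

/-- key variant: `∑_{k=0}^{m} C(m+1,k) S(k,j) = (j+1) S(m+1,j+1)`. -/
lemma choose_mul_S2' (m j : ℕ) :
    (∑ k ∈ range (m + 1), (m + 1).choose k * S2 k j) = (j + 1) * S2 (m + 1) (j + 1) := by
  have h := choose_mul_S2 (m + 1) j
  rw [Finset.sum_range_succ] at h
  have hd : S2 (m + 2) (j + 1) = S2 (m + 1) j + (j + 1) * S2 (m + 1) (j + 1) := rfl
  rw [hd, Nat.choose_self, one_mul] at h
  omega

/-- `∑_j (-1)^j j! S(n, j+1) = δ_{n,1}` (in ℚ). -/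
lemma V_eq (n : ℕ) :
    (∑ j ∈ range (n + 1), (-1 : ℚ) ^ j * j.factorial * S2 n (j + 1))
      = if n = 1 then 1 else 0 := by
  induction n with
  | zero => simp [S2]
  | succ n _ =>
    have hd : ∀ j : ℕ, (S2 (n + 1) (j + 1) : ℚ) = S2 n j + (j + 1) * S2 n (j + 1) := by
      intro j; norm_cast
    have hsplit : (∑ j ∈ range (n + 2), (-1 : ℚ) ^ j * j.factorial * S2 (n + 1) (j + 1))
        = (∑ j ∈ range (n + 2), (-1 : ℚ) ^ j * j.factorial * S2 n j)
          + ∑ j ∈ range (n + 2), (-1 : ℚ) ^ j * ((j + 1) * j.factorial) * S2 n (j + 1) := by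
      rw [← Finset.sum_add_distrib]
      refine Finset.sum_congr rfl fun j _ => ?_
      rw [hd]; ring
    rw [hsplit]
    have hA : (∑ j ∈ range (n + 2), (-1 : ℚ) ^ j * j.factorial * S2 n j)
        = (if n = 0 then 1 else 0)
          + ∑ j ∈ range (n + 1), (-1 : ℚ) ^ (j + 1) * (j + 1).factorial * S2 n (j + 1) := by
      rw [Finset.sum_range_succ']
      cases n <;> simp [S2, add_comm]
    have hB : (∑ j ∈ range (n + 2), (-1 : ℚ) ^ j * ((j + 1) * j.factorial) * S2 n (j + 1))
        = ∑ j ∈ range (n + 1), (-1 : ℚ) ^ j * (j + 1).factorial * S2 n (j + 1) := by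
      rw [Finset.sum_range_succ]
      have hz : S2 n (n + 2) = 0 := S2_eq_zero (by omega)
      rw [hz]
      push_cast
      rw [mul_zero, add_zero]
      refine Finset.sum_congr rfl fun j _ => ?_
      rw [Nat.factorial_succ]
      push_cast
      ring
    rw [hA, hB]
    have : (∑ j ∈ range (n + 1), (-1 : ℚ) ^ (j + 1) * (j + 1).factorial * S2 n (j + 1))
        = -∑ j ∈ range (n + 1), (-1 : ℚ) ^ j * (j + 1).factorial * S2 n (j + 1) := by
      rw [← Finset.sum_neg_distrib]
      refine Finset.sum_congr rfl fun j _ => ?_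
      ring
    rw [this]
    cases n <;> simp

/-- The target sum `T n`. -/
noncomputable def T (n : ℕ) : ℚ :=
  ∑ k ∈ Finset.range (n + 1), (S2 n k : ℚ) * (-1) ^ k * k.factorial / (k + 1)

lemma sum_choose_T (m : ℕ) :
    (∑ k ∈ range (m + 1), ((m + 1).choose k : ℚ) * T k) = if m + 1 = 1 then 1 else 0 := by
  have hext : ∀ k ∈ range (m + 1),
      ((m + 1).choose k : ℚ) * T k
        = ∑ j ∈ range (m + 2), ((m + 1).choose k : ℚ)
            * ((S2 k j : ℚ) * (-1) ^ j * j.factorial / (j + 1)) := by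
    intro k hk
    rw [Finset.mem_range] at hk
    rw [T, Finset.mul_sum]
    refine Finset.sum_subset ?_ ?_
    · intro x hx
      rw [Finset.mem_range] at hx ⊢
      omega
    · intro x _ hx
      rw [Finset.mem_range, not_lt] at hx
      rw [S2_eq_zero (by omega)]
      simp
  rw [Finset.sum_congr rfl hext, Finset.sum_comm]
  have hinner : ∀ j ∈ range (m + 2),
      (∑ k ∈ range (m + 1), ((m + 1).choose k : ℚ)
          * ((S2 k j : ℚ) * (-1) ^ j * j.factorial / (j + 1)))
        = (-1 : ℚ) ^ j * j.factorial * S2 (m + 1) (j + 1) := by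
    intro j _
    have hsum : (∑ k ∈ range (m + 1), ((m + 1).choose k : ℚ) * (S2 k j : ℚ))
        = (((j + 1) * S2 (m + 1) (j + 1) : ℕ) : ℚ) := by
      rw [← choose_mul_S2' m j]
      push_cast
      rfl
    calc (∑ k ∈ range (m + 1), ((m + 1).choose k : ℚ)
          * ((S2 k j : ℚ) * (-1) ^ j * j.factorial / (j + 1)))
        = (∑ k ∈ range (m + 1), ((m + 1).choose k : ℚ) * (S2 k j : ℚ))
            * ((-1) ^ j * j.factorial / (j + 1)) := by
          rw [Finset.sum_mul]
          refine Finset.sum_congr rfl fun k _ => ?_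
          ring
      _ = ((j + 1 : ℚ) * S2 (m + 1) (j + 1)) * ((-1) ^ j * j.factorial / (j + 1)) := by
          rw [hsum]; push_cast; ring
      _ = (-1 : ℚ) ^ j * j.factorial * S2 (m + 1) (j + 1) := by
          have hne : (j + 1 : ℚ) ≠ 0 := by positivity
          field_simp
  rw [Finset.sum_congr rfl hinner, V_eq]

/-- `∑_{k=0}^n S(n,k) (-1)^k k!/(k+1) = B_n`. -/
theorem stirling_sum_eq_bernoulli (n : ℕ) :
    ∑ k ∈ Finset.range (n + 1),
        (S2 n k : ℚ) * (-1) ^ k * k.factorial / (k + 1) = bernoulli n := by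
  suffices h : ∀ n, T n = bernoulli n by exact h n
  intro n
  induction n using Nat.strong_induction_on with
  | _ n ih =>
    have h1 := sum_choose_T n
    have h2 := sum_bernoulli (n + 1)
    have h3 : (∑ k ∈ range (n + 1), ((n + 1).choose k : ℚ) * (T k - bernoulli k)) = 0 := by
      have : (∑ k ∈ range (n + 1), ((n + 1).choose k : ℚ) * (T k - bernoulli k))
          = (∑ k ∈ range (n + 1), ((n + 1).choose k : ℚ) * T k)
            - ∑ k ∈ range (n + 1), ((n + 1).choose k : ℚ) * bernoulli k := by
        rw [← Finset.sum_sub_distrib]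
        refine Finset.sum_congr rfl fun k _ => ?_
        ring
      rw [this, h1, h2]
      ring
    rw [Finset.sum_range_succ] at h3
    have h4 : ∀ k ∈ range n, ((n + 1).choose k : ℚ) * (T k - bernoulli k) = 0 := by
      intro k hk
      rw [Finset.mem_range] at hk
      rw [ih k hk]
      ring
    rw [Finset.sum_eq_zero h4, zero_add, Nat.choose_succ_self_right] at h3
    have hne : ((n : ℚ) + 1) ≠ 0 := by positivity
    have := mul_eq_zero.mp h3
    rcases this with h | h
    · norm_num at h
      exact absurd h hne
    · linarith [sub_eq_zero.mp h]
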